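/- (Proposition 4) Let (x̂′, ŷ, λ̂, x̂) be a fixed point of the Eq-DanyRA updates with stepsizes α, β, η, γ > 0 (in particular η > 0 and γ > 0). Then x̂ = x̂′ and the KKT conditions of the equality-reformulated problem hold: ∇f(x̂) + Aᵀλ̂ = 0, 𝐋λ̂ = 0, and A x̂ + 𝐋 ŷ − d = 0. -/

import Mathlib

/-! Since `γ > 0`, the projection step at the fixed point forces `A x̂ + 𝐋 ŷ = d`.
Substituting the first fixed-point equation into the third gives
`ẑ − d = −η A Aᵀ (ẑ − d)`, and pairing with `ẑ − d` yields
`‖ẑ − d‖² = −η ‖Aᵀ(ẑ − d)‖² ≤ 0`, so `ẑ = d`. Then `A x̂′ = A x̂`, so `x̂′` is itself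
feasible for the projection, whose minimality forces `x̂ = x̂′`; the remaining KKT
conditions are the first two fixed-point equations with `ẑ = d`. -/

set_option autoImplicit false

open scoped BigOperators

noncomputable section

/-- Block-diagonal action `A x` of the stacked matrix `A = blkdiag(A_1,…,A_n)`. -/
def Amul {n m p : ℕ} (A : Fin n → Matrix (Fin m) (Fin p) ℝ)
    (x : EuclideanSpace ℝ (Fin n × Fin p)) : EuclideanSpace ℝ (Fin n × Fin m) :=
  WithLp.toLp 2 (fun q : Fin n × Fin m => ∑ k : Fin p, A q.1 q.2 k * x (q.1, k))

/-- Action of the transpose `Aᵀ v` of the stacked block-diagonal matrix. -/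
def ATmul {n m p : ℕ} (A : Fin n → Matrix (Fin m) (Fin p) ℝ)
    (v : EuclideanSpace ℝ (Fin n × Fin m)) : EuclideanSpace ℝ (Fin n × Fin p) :=
  WithLp.toLp 2 (fun q : Fin n × Fin p => ∑ j : Fin m, A q.1 j q.2 * v (q.1, j))

/-- Action of `𝐋 = 𝓛 ⊗ I_m` on a stacked vector `u ∈ ℝ^{nm}`. -/
def Lmul {n m : ℕ} (L : Matrix (Fin n) (Fin n) ℝ)
    (u : EuclideanSpace ℝ (Fin n × Fin m)) : EuclideanSpace ℝ (Fin n × Fin m) :=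
  WithLp.toLp 2 (fun q : Fin n × Fin m => ∑ l : Fin n, L q.1 l * u (l, q.2))

/-- The stacked objective `f(x) = ∑ i f_i(x_i)`. -/
def stackF {n p : ℕ} (f : Fin n → EuclideanSpace ℝ (Fin p) → ℝ)
    (x : EuclideanSpace ℝ (Fin n × Fin p)) : ℝ :=
  ∑ i : Fin n, f i (WithLp.toLp 2 (fun k => x (i, k)))

open scoped InnerProductSpace

theorem eq_zero_of_eq_neg_smul_comp_adjoint {E F : Type*}
    [NormedAddCommGroup E] [InnerProductSpace ℝ E]
    [NormedAddCommGroup F] [InnerProductSpace ℝ F]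
    {T : E → F} {S : F → E} (hTS : ∀ x v, ⟪T x, v⟫_ℝ = ⟪x, S v⟫_ℝ)
    {η : ℝ} (hη : 0 ≤ η) {w : F} (hw : w = -(η • T (S w))) : w = 0 := by
  rw [← real_inner_self_nonpos]
  calc ⟪w, w⟫_ℝ = -(η * ⟪S w, S w⟫_ℝ) := by
        nth_rewrite 1 [hw]
        rw [inner_neg_left, real_inner_smul_left, hTS]
    _ ≤ 0 := neg_nonpos.2 (mul_nonneg hη real_inner_self_nonneg)

section BlockDiagonal

variable {n m p : ℕ} (A : Fin n → Matrix (Fin m) (Fin p) ℝ)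

theorem Amul_neg (x : EuclideanSpace ℝ (Fin n × Fin p)) : Amul A (-x) = -Amul A x := by
  ext q
  simp [Amul]

theorem ATmul_add (v w : EuclideanSpace ℝ (Fin n × Fin m)) :
    ATmul A (v + w) = ATmul A v + ATmul A w := by
  ext q
  simp [ATmul, mul_add, Finset.sum_add_distrib]

theorem inner_Amul_eq_inner_ATmul (x : EuclideanSpace ℝ (Fin n × Fin p))
    (v : EuclideanSpace ℝ (Fin n × Fin m)) : ⟪Amul A x, v⟫_ℝ = ⟪x, ATmul A v⟫_ℝ := by
  simp only [PiLp.inner_apply, Amul, ATmul, RCLike.inner_apply, conj_trivial,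
    Finset.sum_mul, Finset.mul_sum, Fintype.sum_prod_type]
  refine Finset.sum_congr rfl fun i _ => ?_
  rw [Finset.sum_comm]
  exact Finset.sum_congr rfl fun j _ => Finset.sum_congr rfl fun k _ => by ring

end BlockDiagonal

theorem stmt_15_general {n m p : ℕ}
    (A : Fin n → Matrix (Fin m) (Fin p) ℝ)
    (d : EuclideanSpace ℝ (Fin n × Fin m))
    (L : Matrix (Fin n) (Fin n) ℝ)
    (η γ : ℝ) (hη : 0 < η) (hγ : 0 < γ)
    -- the fixed point, with `gradF` the gradient of the stacked objective
    (xhat' xhat : EuclideanSpace ℝ (Fin n × Fin p))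
    (yhat lamhat : EuclideanSpace ℝ (Fin n × Fin m))
    (gradF : EuclideanSpace ℝ (Fin n × Fin p) → EuclideanSpace ℝ (Fin n × Fin p))
    (zhat : EuclideanSpace ℝ (Fin n × Fin m))
    (hzhat : zhat = Amul A xhat' + Lmul L yhat)
    -- fixed-point conditions of the Eq-DanyRA updates:
    (hfix1 : gradF xhat' + ATmul A (zhat - d + lamhat) = 0)
    (hfix2 : Lmul L (zhat - d + lamhat) = 0)
    (hfix3 : zhat - d = η • Amul A (ATmul A lamhat + gradF xhat'))
    (hfix4mem : Amul A xhat =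
      Amul A xhat - γ • (Amul A xhat + Lmul L yhat - d))
    (hfix4min : ∀ x : EuclideanSpace ℝ (Fin n × Fin p),
      Amul A x = Amul A xhat - γ • (Amul A xhat + Lmul L yhat - d) →
      ‖xhat - xhat'‖ ≤ ‖x - xhat'‖) :
    xhat = xhat' ∧
    gradF xhat + ATmul A lamhat = 0 ∧
    Lmul L lamhat = 0 ∧
    Amul A xhat + Lmul L yhat - d = 0 := by
  have hres : Amul A xhat + Lmul L yhat - d = 0 :=
    (smul_eq_zero.mp (sub_eq_self.mp hfix4mem.symm)).resolve_left hγ.ne'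
  have hdual : ATmul A lamhat + gradF xhat' = -ATmul A (zhat - d) := by
    rw [eq_neg_of_add_eq_zero_left hfix1, ATmul_add]
    abel
  have hz : zhat - d = 0 := by
    refine eq_zero_of_eq_neg_smul_comp_adjoint (inner_Amul_eq_inner_ATmul A) hη.le ?_
    rw [← smul_neg, ← Amul_neg, ← hdual]
    exact hfix3
  have hAx : Amul A xhat' = Amul A xhat := by
    have h : Amul A xhat' + Lmul L yhat - d = Amul A xhat + Lmul L yhat - d := by
      rw [← hzhat, hz, hres]
    simpa using h
  have hx : xhat = xhat' := by
    have h := hfix4min xhat' (by rw [hres, smul_zero, sub_zero, hAx])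
    rwa [sub_self, norm_zero, norm_le_zero_iff, sub_eq_zero] at h
  rw [hz, zero_add] at hfix1 hfix2
  exact ⟨hx, hx ▸ hfix1, hfix2, hres⟩

/-- Proposition 4: any fixed point `(x̂′, ŷ, λ̂, x̂)` of the
Eq-DanyRA updates with stepsizes `α, β, η, γ > 0` satisfies `x̂ = x̂′` and the
KKT conditions of the equality-reformulated problem: `∇f(x̂) + Aᵀλ̂ = 0`,
`𝐋λ̂ = 0`, and `A x̂ + 𝐋 ŷ − d = 0`. -/
theorem stmt_15 {n m p : ℕ} (hn : 1 ≤ n) (hpm : m ≤ p)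
    (f : Fin n → EuclideanSpace ℝ (Fin p) → ℝ)
    (hdiff : ∀ i, Differentiable ℝ (f i))
    (hconv : ∀ i, ConvexOn ℝ Set.univ (f i))
    (A : Fin n → Matrix (Fin m) (Fin p) ℝ)
    (hArank : ∀ i, (A i).rank = m)
    (d : EuclideanSpace ℝ (Fin n × Fin m))
    (L : Matrix (Fin n) (Fin n) ℝ)
    (hLsym : L.IsSymm)
    (hLpsd : L.PosSemidef)
    (hLker : ∀ v : Fin n → ℝ, L.mulVec v = 0 ↔ ∃ c : ℝ, v = fun _ => c)
    (α β η γ : ℝ) (hα : 0 < α) (hβ : 0 < β) (hη : 0 < η) (hγ : 0 < γ)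
    -- the fixed point, with `gradF` the gradient of the stacked objective
    (xhat' xhat : EuclideanSpace ℝ (Fin n × Fin p))
    (yhat lamhat : EuclideanSpace ℝ (Fin n × Fin m))
    (gradF : EuclideanSpace ℝ (Fin n × Fin p) → EuclideanSpace ℝ (Fin n × Fin p))
    (hgradF : gradF = gradient (stackF f))
    (zhat : EuclideanSpace ℝ (Fin n × Fin m))
    (hzhat : zhat = Amul A xhat' + Lmul L yhat)
    -- fixed-point conditions of the Eq-DanyRA updates:
    (hfix1 : gradF xhat' + ATmul A (zhat - d + lamhat) = 0)
    (hfix2 : Lmul L (zhat - d + lamhat) = 0)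
    (hfix3 : zhat - d = η • Amul A (ATmul A lamhat + gradF xhat'))
    (hfix4mem : Amul A xhat =
      Amul A xhat - γ • (Amul A xhat + Lmul L yhat - d))
    (hfix4min : ∀ x : EuclideanSpace ℝ (Fin n × Fin p),
      Amul A x = Amul A xhat - γ • (Amul A xhat + Lmul L yhat - d) →
      ‖xhat - xhat'‖ ≤ ‖x - xhat'‖) :
    xhat = xhat' ∧
    gradF xhat + ATmul A lamhat = 0 ∧
    Lmul L lamhat = 0 ∧
    Amul A xhat + Lmul L yhat - d = 0 :=
  stmt_15_general A d L η γ hη hγ xhat' xhat yhat lamhat gradF zhat hzhat hfix1 hfix2 hfix3 hfix4mem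
    hfix4min
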